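/- There exists a constant C > 0 such that for every ε ∈ (0, 1/4) and every integer m the following holds for the function f_m(x) = |x|^m on the annulus B(0,1/2) ∖ B̄(0,2ε): if m ≤ −2 then ‖f_m‖_{L^{2,1}(B(0,1/2) ∖ B̄(0,2ε))} ≤ C·(2ε)^{m+1}, and if m ≥ 0 then ‖f_m‖_{L^{2,1}(B(0,1/2) ∖ B̄(0,2ε))} ≤ C·2^{−m}. -/

import Mathlib

open MeasureTheory Metric Set
open scoped ENNReal

noncomputable section

abbrev E2 := EuclideanSpace ℝ (Fin 2)

/-- Distribution function of `f` restricted to `Ω` with respect to the measure `μ`. -/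
def distribFn {α E : Type*} [MeasurableSpace α] (μ : Measure α) (Ω : Set α)
    [NormedAddCommGroup E] (f : α → E) (s : ℝ) : ℝ≥0∞ :=
  μ {x ∈ Ω | s < ‖f x‖}

/-- Decreasing rearrangement of `|f|` restricted to `Ω`. -/
def decRearr {α E : Type*} [MeasurableSpace α] (μ : Measure α) (Ω : Set α)
    [NormedAddCommGroup E] (f : α → E) (t : ℝ) : ℝ :=
  sInf {s : ℝ | 0 ≤ s ∧ distribFn μ Ω f s ≤ ENNReal.ofReal t}

/-- The Lorentz `L^{2,1}` norm of `f` on `Ω` :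
`‖f‖_{L^{2,1}(Ω)} = ∫₀^∞ t^{1/2} f^*(t) dt/t`. -/
def L21Norm {α E : Type*} [MeasurableSpace α] (μ : Measure α) (Ω : Set α)
    [NormedAddCommGroup E] (f : α → E) : ℝ≥0∞ :=
  ∫⁻ t in Set.Ioi (0 : ℝ), ENNReal.ofReal (t ^ ((1 : ℝ) / 2) * decRearr μ Ω f t / t)

/-!
Any majorant `g` of the decreasing rearrangement gives `‖f‖_{L^{2,1}} ≤ ∫₀^∞ g(t) t^{-1/2} dt`.
If `|f| ≤ M` on a set of measure at most `V`, then `f^* ≤ M · 1_{(0,V]}`, so `‖f‖_{L^{2,1}} ≤ 2M√V`;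
on `B(0,1/2)` this gives the bound `√π 2^{-m}` for `m ≥ 0`. For `m ≤ -2` the superlevel sets of
`|x|^m` are discs, so `f^*(t) ≤ min((2ε)^m, (t/π)^{m/2})`; splitting the integral at `t = π(2ε)²`
gives two terms, each at most `2√π (2ε)^{m+1}`.
-/

open Real

lemma lintegral_Ioc_const_mul_rpow_neg_half {c V : ℝ} (hc : 0 ≤ c) (hV : 0 ≤ V) :
    ∫⁻ t in Ioc 0 V, ENNReal.ofReal (c * t ^ (-(1 / 2) : ℝ)) = ENNReal.ofReal (c * (2 * √V)) := by
  have hint : IntegrableOn (fun t : ℝ => t ^ (-(1 / 2) : ℝ)) (Ioc 0 V) := by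
    rw [← intervalIntegrable_iff_integrableOn_Ioc_of_le hV]
    exact intervalIntegral.intervalIntegrable_rpow' (by norm_num)
  rw [← ofReal_integral_eq_lintegral_ofReal (hint.const_mul c)]
  · rw [integral_const_mul, ← intervalIntegral.integral_of_le hV,
      integral_rpow (Or.inl (by norm_num)), Real.sqrt_eq_rpow,
      show -(1 / 2 : ℝ) + 1 = 1 / 2 by norm_num, Real.zero_rpow (by norm_num)]
    ring_nf
  · filter_upwards [ae_restrict_mem measurableSet_Ioc] with t ht
    exact mul_nonneg hc (Real.rpow_nonneg ht.1.le _)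

lemma lintegral_Ioi_const_mul_rpow {c a t₀ : ℝ} (hc : 0 ≤ c) (ha : a < -1) (ht₀ : 0 < t₀) :
    ∫⁻ t in Ioi t₀, ENNReal.ofReal (c * t ^ a) =
      ENNReal.ofReal (c * (-t₀ ^ (a + 1) / (a + 1))) := by
  rw [← ofReal_integral_eq_lintegral_ofReal ((integrableOn_Ioi_rpow_of_lt ha ht₀).const_mul c)]
  · rw [integral_const_mul, integral_Ioi_rpow_of_lt ha ht₀]
  · filter_upwards [ae_restrict_mem measurableSet_Ioi] with t ht
    exact mul_nonneg hc (Real.rpow_nonneg (ht₀.trans ht).le _)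

section Rearrangement

variable {α E : Type*} [MeasurableSpace α] [NormedAddCommGroup E] {μ : Measure α} {Ω : Set α}
  {f : α → E} {s t : ℝ}

lemma decRearr_nonneg : 0 ≤ decRearr μ Ω f t :=
  Real.sInf_nonneg fun _ hs => hs.1

lemma decRearr_le_of_distribFn_le (hs : 0 ≤ s) (h : distribFn μ Ω f s ≤ ENNReal.ofReal t) :
    decRearr μ Ω f t ≤ s :=
  csInf_le ⟨0, fun _ hs => hs.1⟩ ⟨hs, h⟩

lemma decRearr_le_of_norm_le {M : ℝ} (hM : 0 ≤ M) (hf : ∀ x ∈ Ω, ‖f x‖ ≤ M) :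
    decRearr μ Ω f t ≤ M := by
  refine decRearr_le_of_distribFn_le hM ?_
  have hempty : {x ∈ Ω | M < ‖f x‖} = ∅ :=
    eq_empty_iff_forall_notMem.2 fun x hx => (hf x hx.1).not_gt hx.2
  simp [distribFn, hempty]

lemma decRearr_eq_zero_of_measure_le (h : μ Ω ≤ ENNReal.ofReal t) : decRearr μ Ω f t = 0 :=
  (decRearr_le_of_distribFn_le le_rfl ((measure_mono fun _ hx => hx.1).trans h)).antisymm
    decRearr_nonneg

lemma L21Norm_le_lintegral_Ioc_add_lintegral_Ioi {V : ℝ} (hV : 0 ≤ V) {g₁ g₂ : ℝ → ℝ}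
    (h₁ : ∀ t ∈ Ioc 0 V, decRearr μ Ω f t ≤ g₁ t) (h₂ : ∀ t ∈ Ioi V, decRearr μ Ω f t ≤ g₂ t) :
    L21Norm μ Ω f ≤ (∫⁻ t in Ioc 0 V, ENNReal.ofReal (g₁ t * t ^ (-(1 / 2) : ℝ))) +
      ∫⁻ t in Ioi V, ENNReal.ofReal (g₂ t * t ^ (-(1 / 2) : ℝ)) := by
  have integrand_eq : ∀ t : ℝ, 0 < t →
      t ^ ((1 : ℝ) / 2) * decRearr μ Ω f t / t = decRearr μ Ω f t * t ^ (-(1 / 2) : ℝ) := by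
    intro t ht
    have hsqrt : 0 < √t := Real.sqrt_pos.2 ht
    rw [Real.rpow_neg ht.le, ← Real.sqrt_eq_rpow]
    field_simp
    rw [Real.sq_sqrt ht.le]
    ring
  rw [L21Norm, ← Ioc_union_Ioi_eq_Ioi hV, lintegral_union measurableSet_Ioi Ioc_disjoint_Ioi_same]
  refine add_le_add ?_ ?_
  · refine setLIntegral_mono' measurableSet_Ioc fun t ht => ?_
    rw [integrand_eq t ht.1]
    exact ENNReal.ofReal_le_ofReal
      (mul_le_mul_of_nonneg_right (h₁ t ht) (Real.rpow_nonneg ht.1.le _))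
  · refine setLIntegral_mono' measurableSet_Ioi fun t ht => ?_
    have ht₀ : 0 < t := hV.trans_lt ht
    rw [integrand_eq t ht₀]
    exact ENNReal.ofReal_le_ofReal
      (mul_le_mul_of_nonneg_right (h₂ t ht) (Real.rpow_nonneg ht₀.le _))

lemma L21Norm_le_of_norm_le {M V : ℝ} (hM : 0 ≤ M) (hV : 0 ≤ V)
    (hf : ∀ x ∈ Ω, ‖f x‖ ≤ M) (hΩ : μ Ω ≤ ENNReal.ofReal V) :
    L21Norm μ Ω f ≤ ENNReal.ofReal (M * (2 * √V)) := by
  refine (L21Norm_le_lintegral_Ioc_add_lintegral_Ioi hV (g₁ := fun _ => M) (g₂ := fun _ => 0)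
    (fun _ _ => decRearr_le_of_norm_le hM hf)
    (fun t ht => (decRearr_eq_zero_of_measure_le
      (hΩ.trans (ENNReal.ofReal_le_ofReal (le_of_lt ht)))).le)).trans_eq ?_
  simp only [zero_mul, ENNReal.ofReal_zero, lintegral_zero, add_zero]
  exact lintegral_Ioc_const_mul_rpow_neg_half hM hV

end Rearrangement

lemma volume_ball_sqrt_div_pi {t : ℝ} (ht : 0 ≤ t) :
    volume (ball (0 : E2) √(t / π)) = ENNReal.ofReal t := by
  rw [EuclideanSpace.volume_ball_fin_two, ← ENNReal.ofReal_pow (Real.sqrt_nonneg _),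
    Real.sq_sqrt (by positivity), ← ENNReal.ofReal_mul (by positivity),
    div_mul_cancel₀ _ pi_ne_zero]

lemma decRearr_norm_rpow_le {Ω : Set E2} {p t : ℝ} (hp : p ≤ 0) (ht : 0 < t) :
    decRearr volume Ω (fun x : E2 => ‖x‖ ^ p) t ≤ (t / π) ^ (p / 2) := by
  have hr : 0 < √(t / π) := Real.sqrt_pos.2 (by positivity)
  have hr_rpow : √(t / π) ^ p = (t / π) ^ (p / 2) := by
    rw [Real.sqrt_eq_rpow, ← Real.rpow_mul (by positivity)]
    ring_nf
  refine decRearr_le_of_distribFn_le (Real.rpow_nonneg (by positivity) _) ?_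
  refine (measure_mono fun x hx => ?_).trans (volume_ball_sqrt_div_pi ht.le).le
  obtain ⟨-, hx⟩ := hx
  rw [Real.norm_of_nonneg (Real.rpow_nonneg (norm_nonneg x) _), ← hr_rpow] at hx
  rw [mem_ball_zero_iff]
  by_contra! hle
  exact (Real.rpow_le_rpow_of_nonpos hr hle hp).not_gt hx

lemma L21Norm_norm_rpow_le_of_subset_ball {Ω : Set E2} {R p : ℝ} (hR : 0 ≤ R)
    (hΩ : Ω ⊆ ball 0 R) (hp : 0 ≤ p) :
    L21Norm volume Ω (fun x : E2 => ‖x‖ ^ p) ≤ ENNReal.ofReal (2 * √π * R ^ (p + 1)) := by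
  have hnorm : ∀ x ∈ Ω, ‖‖x‖ ^ p‖ ≤ R ^ p := fun x hx => by
    rw [Real.norm_of_nonneg (Real.rpow_nonneg (norm_nonneg x) _)]
    exact Real.rpow_le_rpow (norm_nonneg x) (mem_ball_zero_iff.1 (hΩ hx)).le hp
  have hvol : volume Ω ≤ ENNReal.ofReal (π * R ^ 2) :=
    (measure_mono hΩ).trans_eq (by
      rw [EuclideanSpace.volume_ball_fin_two, ← ENNReal.ofReal_pow hR,
        ← ENNReal.ofReal_mul (by positivity), mul_comm])
  refine (L21Norm_le_of_norm_le (Real.rpow_nonneg hR p) (by positivity) hnorm hvol).trans_eq ?_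
  rw [Real.sqrt_mul pi_nonneg, Real.sqrt_sq hR, Real.rpow_add_one' hR (by linarith)]
  ring_nf

lemma lintegral_Ioi_div_pi_rpow_mul_rpow_neg_half {X p : ℝ} (hX : 0 < X) (hp : p < -1) :
    ∫⁻ t in Ioi (π * X ^ 2), ENNReal.ofReal ((t / π) ^ (p / 2) * t ^ (-(1 / 2) : ℝ)) =
      ENNReal.ofReal (√π * X ^ (p + 1) * (-2 / (p + 1))) := by
  have ht₀ : 0 < π * X ^ 2 := by positivity
  have integrand_eq : ∀ t ∈ Ioi (π * X ^ 2),
      ENNReal.ofReal ((t / π) ^ (p / 2) * t ^ (-(1 / 2) : ℝ)) =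
        ENNReal.ofReal (π ^ (-(p / 2)) * t ^ ((p - 1) / 2)) := by
    intro t ht
    have ht0 : 0 < t := ht₀.trans ht
    rw [Real.div_rpow ht0.le pi_nonneg, Real.rpow_neg pi_nonneg, div_mul_eq_mul_div,
      ← Real.rpow_add ht0]
    ring_nf
  rw [setLIntegral_congr_fun measurableSet_Ioi integrand_eq,
    lintegral_Ioi_const_mul_rpow (by positivity) (by linarith) ht₀]
  congr 1
  have hpow : (π * X ^ 2) ^ ((p - 1) / 2 + 1) = π ^ ((p + 1) / 2) * X ^ (p + 1) := by
    rw [Real.mul_rpow pi_nonneg (sq_nonneg X), ← Real.rpow_natCast X 2,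
      ← Real.rpow_mul hX.le]
    ring_nf
  have hpi : π ^ (-(p / 2)) * π ^ ((p + 1) / 2) = √π := by
    rw [← Real.rpow_add pi_pos, Real.sqrt_eq_rpow]
    ring_nf
  have hp1 : p + 1 ≠ 0 := by linarith
  rw [hpow, show (p - 1) / 2 + 1 = (p + 1) / 2 by ring, ← hpi]
  field_simp

lemma L21Norm_norm_rpow_le_of_subset_compl_closedBall {Ω : Set E2} {X p : ℝ} (hX : 0 < X)
    (hΩ : Ω ⊆ (closedBall 0 X)ᶜ) (hp : p ≤ -2) :
    L21Norm volume Ω (fun x : E2 => ‖x‖ ^ p) ≤ ENNReal.ofReal (4 * √π * X ^ (p + 1)) := by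
  set t₀ := π * X ^ 2
  have ht₀ : 0 < t₀ := by positivity
  have hXp : 0 < X ^ p := Real.rpow_pos_of_pos hX p
  have hXp1 : 0 < X ^ (p + 1) := Real.rpow_pos_of_pos hX _
  have head_le : ∀ t ∈ Ioc 0 t₀, decRearr volume Ω (fun x : E2 => ‖x‖ ^ p) t ≤ X ^ p :=
    fun _ _ => decRearr_le_of_norm_le hXp.le fun x hx => by
      rw [Real.norm_of_nonneg (Real.rpow_nonneg (norm_nonneg x) _)]
      have hXx : X < ‖x‖ := by simpa using hΩ hx
      exact Real.rpow_le_rpow_of_nonpos hX hXx.le (by linarith)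
  have tail_le : ∀ t ∈ Ioi t₀, decRearr volume Ω (fun x : E2 => ‖x‖ ^ p) t ≤ (t / π) ^ (p / 2) :=
    fun t ht => decRearr_norm_rpow_le (by linarith) (ht₀.trans ht)
  have head_eq : ∫⁻ t in Ioc 0 t₀, ENNReal.ofReal (X ^ p * t ^ (-(1 / 2) : ℝ)) =
      ENNReal.ofReal (2 * √π * X ^ (p + 1)) := by
    rw [lintegral_Ioc_const_mul_rpow_neg_half hXp.le ht₀.le, Real.sqrt_mul pi_nonneg,
      Real.sqrt_sq hX.le, Real.rpow_add_one hX.ne']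
    ring_nf
  have tail_eq := lintegral_Ioi_div_pi_rpow_mul_rpow_neg_half hX (p := p) (by linarith)
  have tail_le_head : √π * X ^ (p + 1) * (-2 / (p + 1)) ≤ 2 * √π * X ^ (p + 1) := by
    have h : -2 / (p + 1) ≤ 2 := by
      rw [div_le_iff_of_neg (by linarith)]
      linarith
    nlinarith [Real.sqrt_nonneg π, mul_nonneg (Real.sqrt_nonneg π) hXp1.le]
  calc L21Norm volume Ω (fun x : E2 => ‖x‖ ^ p)
      ≤ ENNReal.ofReal (2 * √π * X ^ (p + 1)) + ENNReal.ofReal (2 * √π * X ^ (p + 1)) := by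
        refine (L21Norm_le_lintegral_Ioc_add_lintegral_Ioi ht₀.le head_le tail_le).trans ?_
        rw [head_eq, tail_eq]
        gcongr
    _ = ENNReal.ofReal (4 * √π * X ^ (p + 1)) := by
        rw [← ENNReal.ofReal_add (by positivity) (by positivity)]
        ring_nf

/-- There is a constant `C > 0` such that for every `ε ∈ (0,1/4)` and every integer `m`,
the function `f_m(x) = |x|^m` on the annulus `B(0,1/2) ∖ B̄(0,2ε)` satisfies
`‖f_m‖_{L^{2,1}} ≤ C (2ε)^{m+1}` when `m ≤ -2` and `‖f_m‖_{L^{2,1}} ≤ C 2^{-m}` when `m ≥ 0`. -/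
theorem L21_norm_pow :
    ∃ C : ℝ, 0 < C ∧ ∀ ε : ℝ, ε ∈ Set.Ioo (0 : ℝ) (1 / 4) → ∀ m : ℤ,
      (m ≤ -2 →
        L21Norm volume (ball (0 : E2) (1 / 2) \ closedBall 0 (2 * ε))
            (fun x => ‖x‖ ^ m) ≤
          ENNReal.ofReal (C * (2 * ε) ^ (m + 1))) ∧
      (0 ≤ m →
        L21Norm volume (ball (0 : E2) (1 / 2) \ closedBall 0 (2 * ε))
            (fun x => ‖x‖ ^ m) ≤
          ENNReal.ofReal (C * 2 ^ (-m))) := by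
  refine ⟨4 * √π, by positivity, fun ε hε m => ⟨fun hm => ?_, fun hm => ?_⟩⟩
  · have h := L21Norm_norm_rpow_le_of_subset_compl_closedBall (X := 2 * ε) (p := m)
      (by linarith [hε.1]) (sdiff_subset_compl (ball 0 (1 / 2)) _) (by exact_mod_cast hm)
    simp only [Real.rpow_intCast] at h
    rwa [← Real.rpow_intCast, Int.cast_add, Int.cast_one]
  · have h := L21Norm_norm_rpow_le_of_subset_ball (R := 1 / 2) (p := m) (by norm_num)
      (sdiff_subset (t := closedBall 0 (2 * ε))) (by exact_mod_cast hm)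
    simp only [Real.rpow_intCast] at h
    refine h.trans (ENNReal.ofReal_le_ofReal ?_)
    rw [show (m : ℝ) + 1 = ((m + 1 : ℤ) : ℝ) by push_cast; ring, Real.rpow_intCast,
      zpow_add_one₀ (by norm_num), one_div, inv_zpow']
    nlinarith [Real.sqrt_nonneg π, zpow_pos (two_pos : (0 : ℝ) < 2) (-m)]
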